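/- Fix integers n₁, n₂ ≥ 1, reals a₁, b₁, a₂, b₂, and an integer ℓ. Then there exist a constant C > 0 and a number κ ∈ [0,1) such that for all integers N ≥ 1 and all integers x₁, x₂ ≤ ℓ: |K₀(x₁,x₂)| ≤ C e^{(x₁−x₂)/2} e^{−|x₂−x₁|/4}, |K₁(x₁,x₂)| ≤ C e^{(x₁−x₂)/2} e^{(x₁+x₂)/4}, and |K^{(N)}(x₁,x₂)| ≤ C e^{(x₁−x₂)/2} e^{(x₁+x₂)/4} κ^N. -/

import Mathlib

open Complex MeasureTheory
open scoped Real

/-- `K₀(x₁,x₂)`: the first (diffusion) term of the finite-`N` flat-initial-condition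
PushASEP kernel, as a contour integral over the circle `|w| = ρ₀`, `0 < ρ₀ < 1`. -/
noncomputable def K0 (n₁ n₂ : ℕ) (a₁ b₁ a₂ b₂ ρ₀ : ℝ) (x₁ x₂ : ℤ) : ℂ :=
  (2 * (Real.pi : ℂ) * Complex.I)⁻¹ *
    ∮ w in C(0, ρ₀), w ^ (-(x₁ - x₂ + 1)) * (w / (1 - w)) ^ ((n₂ : ℤ) - n₁) *
      Complex.exp (((a₁ : ℂ) - a₂) * w + ((b₁ : ℂ) - b₂) / w)

/-- `K₁(x₁,x₂)`: the second (`N`-independent) term, a contour integral over the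
circle `|z − 1| = r₁`, `0 < r₁ < 1`. -/
noncomputable def K1 (n₁ n₂ : ℕ) (a₁ b₁ a₂ b₂ r₁ : ℝ) (x₁ x₂ : ℤ) : ℂ :=
  (2 * (Real.pi : ℂ) * Complex.I)⁻¹ *
    ∮ z in C(1, r₁),
      Complex.exp ((a₁ : ℂ) * (1 - z) + (b₁ : ℂ) / (1 - z) - (a₂ : ℂ) * z - (b₂ : ℂ) / z) *
        z ^ (x₂ + (n₂ : ℤ) + n₁) * (1 - z) ^ (-(x₁ + (n₁ : ℤ) + n₂ + 1))

/-- `K^{(N)}(x₁,x₂)`: the `N`-dependent term, a double contour integral over the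
circles `|z − 1| = r` (`0 < r < 1/2`) and `|w| = ρ` (`0 < ρ < min(r, 1−r)`). -/
noncomputable def KN (n₁ n₂ : ℕ) (a₁ b₁ a₂ b₂ r ρ : ℝ) (N : ℕ) (x₁ x₂ : ℤ) : ℂ :=
  (2 * (Real.pi : ℂ) * Complex.I)⁻¹ *
    ∮ z in C(1, r), (2 * (Real.pi : ℂ) * Complex.I)⁻¹ *
      ∮ w in C(0, ρ),
        Complex.exp ((a₁ : ℂ) * w + (b₁ : ℂ) / w - (a₂ : ℂ) * z - (b₂ : ℂ) / z) *
          (w - 1) ^ (n₁ + N) * (z - 1) ^ (-((n₂ : ℤ) + N)) *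
          z ^ (x₂ + (n₂ : ℤ) - N) * w ^ (-(x₁ + (n₁ : ℤ) - N + 1)) *
          (2 * z - 1) / ((w - z) * (w - 1 + z))

/-! Each kernel is a contour integral whose value does not change when its circles are moved
within the admissible range (Cauchy's theorem on an annulus; for `K^{(N)}` this is done one
variable at a time, with Fubini in between). So all three may be evaluated on fixed circles:
`|w| = 4/5` or `|w| = 1/4` for `K₀`, according to the sign of `x₁ - x₂`; `|z - 1| = 1/5` for
`K₁`; `|z - 1| = 1/5` and `|w| = 1/8` for `K^{(N)}`. There the integrand is a function that does
not depend on `x₁, x₂, N`, and is therefore bounded by compactness, times powers `z ^ (x₂ - ℓ)`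
and `w ^ (ℓ - x₁)` (resp. `(1 - z) ^ (ℓ - x₁)`), and, for `K^{(N)}`, times
`((w - 1) w / ((z - 1) z)) ^ N`. Since `|z| ≥ 4/5 ≥ e^{-1/4}` and `|w| ≤ 1/4 ≤ e^{-3/4}`, the
powers give the exponential weights, and the last factor has modulus at most `(225/256) ^ N`.
-/

open Set Metric

section CircleIntegral

variable {E : Type*} [NormedAddCommGroup E] [NormedSpace ℂ E]

theorem circleIntegral_eq_of_differentiableAt_annulus [CompleteSpace E] {c : ℂ} {a b r R : ℝ}
    {f : ℂ → E} (ha : 0 ≤ a) (hf : ∀ z, a < dist z c → dist z c < b → DifferentiableAt ℂ f z)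
    (hr : r ∈ Ioo a b) (hR : R ∈ Ioo a b) :
    (∮ z in C(c, r), f z) = ∮ z in C(c, R), f z := by
  wlog h : r ≤ R generalizing r R
  · exact (this hR hr (le_of_not_ge h)).symm
  refine (circleIntegral_eq_of_differentiable_on_annulus_off_countable (ha.trans_lt hr.1) h
    countable_empty (fun z hz => ?_) fun z hz => ?_).symm
  · exact (hf z (hr.1.trans_le (not_lt.1 hz.2)) ((mem_closedBall.1 hz.1).trans_lt hR.2)
      ).continuousAt.continuousWithinAt
  · exact hf z (hr.1.trans (not_le.1 hz.1.2)) ((mem_ball.1 hz.1.1).trans hR.2)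

theorem circleIntegral_comm {c₁ c₂ : ℂ} {R₁ R₂ : ℝ} {f : ℂ → ℂ → E}
    (hf : Continuous fun p : ℝ × ℝ => f (circleMap c₁ R₁ p.1) (circleMap c₂ R₂ p.2)) :
    (∮ z in C(c₁, R₁), ∮ w in C(c₂, R₂), f z w) = ∮ w in C(c₂, R₂), ∮ z in C(c₁, R₁), f z w := by
  simp only [circleIntegral, ← intervalIntegral.integral_smul]
  rw [intervalIntegral_intervalIntegral_swap]
  · simp only [smul_comm (deriv (circleMap c₁ R₁) _)]
  · refine (Continuous.continuousOn ?_ |>.integrableOn_compact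
      (isCompact_uIcc.prod isCompact_uIcc)).mono_set (prod_mono uIoc_subset_uIcc uIoc_subset_uIcc)
    simp only [deriv_circleMap]
    exact ((continuous_circleMap 0 R₁).comp continuous_fst |>.mul continuous_const).smul
      (((continuous_circleMap 0 R₂).comp continuous_snd |>.mul continuous_const).smul hf)

theorem norm_two_pi_I_inv_mul_circleIntegral_le {f : ℂ → ℂ} {c : ℂ} {R M : ℝ} (hR : 0 ≤ R)
    (h : ∀ z ∈ sphere c R, ‖f z‖ ≤ M) :
    ‖(2 * (π : ℂ) * I)⁻¹ * ∮ z in C(c, R), f z‖ ≤ R * M := by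
  rw [← smul_eq_mul]
  exact circleIntegral.norm_two_pi_i_inv_smul_integral_le_of_norm_le_const hR h

end CircleIntegral

theorem IsCompact.exists_nonneg_bound_of_continuousOn {α E : Type*} [TopologicalSpace α]
    [SeminormedAddGroup E] {s : Set α} (hs : IsCompact s) {f : α → E} (hf : ContinuousOn f s) :
    ∃ C, 0 ≤ C ∧ ∀ x ∈ s, ‖f x‖ ≤ C := by
  obtain ⟨C, hC⟩ := hs.exists_bound_of_continuousOn hf
  exact ⟨max C 0, le_max_right _ _, fun x hx => (hC x hx).trans (le_max_left _ _)⟩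

theorem zpow_eq_exp_mul_log {q : ℝ} (hq : 0 < q) (k : ℤ) : q ^ k = Real.exp (k * Real.log q) := by
  rw [← Real.rpow_intCast, Real.rpow_def_of_pos hq, mul_comm]

theorem zpow_le_exp_of_nonpos {q α : ℝ} {k : ℤ} (hq : Real.exp (-α) ≤ q) (hk : k ≤ 0) :
    q ^ k ≤ Real.exp (-α * k) := by
  have hq0 := (Real.exp_pos _).trans_le hq
  rw [zpow_eq_exp_mul_log hq0, Real.exp_le_exp]
  have hlog : -α ≤ Real.log q := (Real.le_log_iff_exp_le hq0).2 hq
  nlinarith [(by exact_mod_cast hk : (k : ℝ) ≤ 0)]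

theorem zpow_le_exp_of_nonneg {q α : ℝ} {k : ℤ} (hq0 : 0 < q) (hq : q ≤ Real.exp (-α))
    (hk : 0 ≤ k) : q ^ k ≤ Real.exp (-α * k) := by
  rw [zpow_eq_exp_mul_log hq0, Real.exp_le_exp]
  have hlog : Real.log q ≤ -α := (Real.log_le_iff_le_exp hq0).2 hq
  nlinarith [(by exact_mod_cast hk : (0 : ℝ) ≤ k)]

theorem exp_neg_one_fourth_le : Real.exp (-(1 / 4)) ≤ 4 / 5 := by
  rw [Real.exp_neg, inv_le_comm₀ (Real.exp_pos _) (by norm_num)]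
  linarith [Real.add_one_le_exp (1 / 4 : ℝ)]

theorem one_fourth_le_exp_neg_three_fourths : 1 / 4 ≤ Real.exp (-(3 / 4)) := by
  linarith [Real.add_one_le_exp (-(3 / 4) : ℝ)]

theorem zpow_mul_zpow_le_exp {p q : ℝ} {x₁ x₂ ℓ : ℤ} (hp : 4 / 5 ≤ p) (hq0 : 0 < q)
    (hq : q ≤ 1 / 4) (h₁ : x₁ ≤ ℓ) (h₂ : x₂ ≤ ℓ) :
    p ^ (x₂ - ℓ) * q ^ (ℓ - x₁) ≤
      Real.exp (-ℓ / 2) * (Real.exp (((x₁ : ℝ) - x₂) / 2) * Real.exp (((x₁ : ℝ) + x₂) / 4)) := by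
  have hp' := zpow_le_exp_of_nonpos (exp_neg_one_fourth_le.trans hp) (sub_nonpos.2 h₂)
  have hq' := zpow_le_exp_of_nonneg hq0 (hq.trans one_fourth_le_exp_neg_three_fourths)
    (sub_nonneg.2 h₁)
  refine (mul_le_mul hp' hq' (zpow_nonneg hq0.le _) (Real.exp_nonneg _)).trans_eq ?_
  simp only [← Real.exp_add]
  congr 1
  push_cast
  ring

theorem one_sub_le_norm_of_mem_sphere {z : ℂ} {r : ℝ} (hz : z ∈ sphere (1 : ℂ) r) :
    1 - r ≤ ‖z‖ := by
  have h := norm_sub_norm_le (1 : ℂ) z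
  rw [norm_one, ← dist_eq_norm, dist_comm, mem_sphere.1 hz] at h
  linarith

theorem norm_sub_one_mul_div_sub_one_mul_le {z w : ℂ} (hz : z ∈ sphere (1 : ℂ) (1 / 5))
    (hw : w ∈ sphere (0 : ℂ) (1 / 8)) : ‖(w - 1) * w / ((z - 1) * z)‖ ≤ 225 / 256 := by
  have hz' := one_sub_le_norm_of_mem_sphere hz
  rw [mem_sphere, dist_eq_norm] at hz
  rw [mem_sphere_zero_iff_norm] at hw
  have hw' : ‖w - 1‖ ≤ 9 / 8 := by linarith [norm_sub_le w 1, norm_one (α := ℂ)]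
  rw [norm_div, norm_mul, norm_mul, hz, hw, div_le_iff₀ (by linarith)]
  nlinarith [norm_nonneg (w - 1)]

noncomputable def k1Integrand (n₁ n₂ : ℕ) (a₁ b₁ a₂ b₂ : ℝ) (x₁ x₂ : ℤ) (z : ℂ) : ℂ :=
  Complex.exp ((a₁ : ℂ) * (1 - z) + (b₁ : ℂ) / (1 - z) - (a₂ : ℂ) * z - (b₂ : ℂ) / z) *
    z ^ (x₂ + (n₂ : ℤ) + n₁) * (1 - z) ^ (-(x₁ + (n₁ : ℤ) + n₂ + 1))

noncomputable def knIntegrand (n₁ n₂ : ℕ) (a₁ b₁ a₂ b₂ : ℝ) (N : ℕ) (x₁ x₂ : ℤ) (z w : ℂ) : ℂ :=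
  Complex.exp ((a₁ : ℂ) * w + (b₁ : ℂ) / w - (a₂ : ℂ) * z - (b₂ : ℂ) / z) *
    (w - 1) ^ (n₁ + N) * (z - 1) ^ (-((n₂ : ℤ) + N)) *
    z ^ (x₂ + (n₂ : ℤ) - N) * w ^ (-(x₁ + (n₁ : ℤ) - N + 1)) *
    (2 * z - 1) / ((w - z) * (w - 1 + z))

section Kernels

variable (n₁ n₂ : ℕ) (a₁ b₁ a₂ b₂ : ℝ)

theorem K0_radius_eq {ρ ρ' : ℝ} (hρ : ρ ∈ Ioo 0 1) (hρ' : ρ' ∈ Ioo 0 1) (x₁ x₂ : ℤ) :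
    K0 n₁ n₂ a₁ b₁ a₂ b₂ ρ x₁ x₂ = K0 n₁ n₂ a₁ b₁ a₂ b₂ ρ' x₁ x₂ := by
  refine congrArg _ (circleIntegral_eq_of_differentiableAt_annulus le_rfl
    (fun w hw0 hw1 => ?_) hρ hρ')
  rw [dist_zero_right] at hw0 hw1
  have hw0 : w ≠ 0 := norm_pos_iff.1 hw0
  have hw1 : 1 - w ≠ 0 := fun h => by rw [← sub_eq_zero.1 h, norm_one] at hw1; exact hw1.false
  fun_prop (disch := simp [*])

theorem exists_norm_K0_le_zpow {u : ℝ} (hu : u ∈ Ioo 0 1) :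
    ∃ M, 0 ≤ M ∧ ∀ x₁ x₂ : ℤ, ‖K0 n₁ n₂ a₁ b₁ a₂ b₂ u x₁ x₂‖ ≤ M * u ^ (x₂ - x₁) := by
  have hsphere : ∀ w ∈ sphere (0 : ℂ) u, ‖w‖ = u := fun w hw => mem_sphere_zero_iff_norm.1 hw
  have hF : ContinuousOn (fun w : ℂ => (w / (1 - w)) ^ ((n₂ : ℤ) - n₁) *
      Complex.exp (((a₁ : ℂ) - a₂) * w + ((b₁ : ℂ) - b₂) / w)) (sphere 0 u) := fun w hw => by
    have hw0 : w ≠ 0 := norm_pos_iff.1 ((hsphere w hw).symm ▸ hu.1)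
    have hw1 : 1 - w ≠ 0 := fun h => by
      have := hsphere w hw; rw [← sub_eq_zero.1 h, norm_one] at this; exact hu.2.ne this.symm
    exact ContinuousAt.continuousWithinAt (by fun_prop (disch := simp [*]))
  obtain ⟨M, hM0, hM⟩ := IsCompact.exists_nonneg_bound_of_continuousOn (isCompact_sphere _ _) hF
  refine ⟨M, hM0, fun x₁ x₂ => ?_⟩
  have hbound : ∀ w ∈ sphere (0 : ℂ) u,
      ‖w ^ (-(x₁ - x₂ + 1)) * (w / (1 - w)) ^ ((n₂ : ℤ) - n₁) *
        Complex.exp (((a₁ : ℂ) - a₂) * w + ((b₁ : ℂ) - b₂) / w)‖ ≤ u ^ (-(x₁ - x₂ + 1)) * M := by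
    intro w hw
    rw [mul_assoc, norm_mul, norm_zpow, hsphere w hw]
    exact mul_le_mul_of_nonneg_left (hM w hw) (zpow_nonneg hu.1.le _)
  refine (norm_two_pi_I_inv_mul_circleIntegral_le hu.1.le hbound).trans_eq ?_
  rw [← mul_assoc, mul_comm, ← zpow_one_add₀ hu.1.ne', show 1 + -(x₁ - x₂ + 1) = x₂ - x₁ by ring]

theorem exists_norm_K0_le :
    ∃ C, ∀ ρ₀ : ℝ, 0 < ρ₀ → ρ₀ < 1 → ∀ x₁ x₂ : ℤ, ‖K0 n₁ n₂ a₁ b₁ a₂ b₂ ρ₀ x₁ x₂‖ ≤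
      C * Real.exp (((x₁ : ℝ) - x₂) / 2) * Real.exp (-|(x₂ : ℝ) - x₁| / 4) := by
  obtain ⟨M, hM0, hM⟩ := exists_norm_K0_le_zpow n₁ n₂ a₁ b₁ a₂ b₂ (u := 4 / 5) (by norm_num)
  obtain ⟨M', hM'0, hM'⟩ := exists_norm_K0_le_zpow n₁ n₂ a₁ b₁ a₂ b₂ (u := 1 / 4) (by norm_num)
  refine ⟨max M M', fun ρ₀ h₀ h₁ x₁ x₂ => ?_⟩
  rw [mul_assoc, ← Real.exp_add]
  rcases le_total x₂ x₁ with h | h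
  · rw [K0_radius_eq n₁ n₂ a₁ b₁ a₂ b₂ ⟨h₀, h₁⟩ (by norm_num : (4 / 5 : ℝ) ∈ Ioo 0 1)]
    have hx : (x₂ : ℝ) - x₁ ≤ 0 := by exact_mod_cast sub_nonpos.2 h
    calc _ ≤ M * (4 / 5 : ℝ) ^ (x₂ - x₁) := hM x₁ x₂
      _ ≤ max M M' * Real.exp (-(1 / 4) * ↑(x₂ - x₁)) :=
        mul_le_mul (le_max_left _ _) (zpow_le_exp_of_nonpos exp_neg_one_fourth_le
          (sub_nonpos.2 h)) (zpow_nonneg (by norm_num) _) (hM0.trans (le_max_left _ _))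
      _ = _ := by rw [abs_of_nonpos hx]; push_cast; ring_nf
  · rw [K0_radius_eq n₁ n₂ a₁ b₁ a₂ b₂ ⟨h₀, h₁⟩ (by norm_num : (1 / 4 : ℝ) ∈ Ioo 0 1)]
    have hx : 0 ≤ (x₂ : ℝ) - x₁ := by exact_mod_cast sub_nonneg.2 h
    calc _ ≤ M' * (1 / 4 : ℝ) ^ (x₂ - x₁) := hM' x₁ x₂
      _ ≤ max M M' * Real.exp (-(3 / 4) * ↑(x₂ - x₁)) :=
        mul_le_mul (le_max_right _ _) (zpow_le_exp_of_nonneg (by norm_num)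
          one_fourth_le_exp_neg_three_fourths (sub_nonneg.2 h)) (zpow_nonneg (by norm_num) _)
          (hM'0.trans (le_max_right _ _))
      _ = _ := by rw [abs_of_nonneg hx]; push_cast; ring_nf

theorem differentiableAt_k1Integrand (x₁ x₂ : ℤ) {z : ℂ} (hz0 : z ≠ 0) (hz1 : 1 - z ≠ 0) :
    DifferentiableAt ℂ (k1Integrand n₁ n₂ a₁ b₁ a₂ b₂ x₁ x₂) z := by
  unfold k1Integrand
  fun_prop (disch := simp [*])

theorem k1Integrand_eq_mul (ℓ x₁ x₂ : ℤ) {z : ℂ} (hz0 : z ≠ 0) (hz1 : 1 - z ≠ 0) :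
    k1Integrand n₁ n₂ a₁ b₁ a₂ b₂ x₁ x₂ z =
      k1Integrand n₁ n₂ a₁ b₁ a₂ b₂ ℓ ℓ z * (z ^ (x₂ - ℓ) * (1 - z) ^ (ℓ - x₁)) := by
  rw [k1Integrand, k1Integrand, show x₂ + (n₂ : ℤ) + n₁ = ℓ + n₂ + n₁ + (x₂ - ℓ) by ring,
    show -(x₁ + (n₁ : ℤ) + n₂ + 1) = -(ℓ + n₁ + n₂ + 1) + (ℓ - x₁) by ring,
    zpow_add₀ hz0, zpow_add₀ hz1]
  ring

theorem K1_eq_circleIntegral (r : ℝ) (x₁ x₂ : ℤ) :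
    K1 n₁ n₂ a₁ b₁ a₂ b₂ r x₁ x₂ =
      (2 * (π : ℂ) * I)⁻¹ * ∮ z in C(1, r), k1Integrand n₁ n₂ a₁ b₁ a₂ b₂ x₁ x₂ z :=
  rfl

theorem K1_radius_eq {r r' : ℝ} (hr : r ∈ Ioo 0 1) (hr' : r' ∈ Ioo 0 1) (x₁ x₂ : ℤ) :
    K1 n₁ n₂ a₁ b₁ a₂ b₂ r x₁ x₂ = K1 n₁ n₂ a₁ b₁ a₂ b₂ r' x₁ x₂ := by
  refine congrArg _ (circleIntegral_eq_of_differentiableAt_annulus le_rfl (fun z hz0 hz1 => ?_)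
    hr hr')
  refine differentiableAt_k1Integrand n₁ n₂ a₁ b₁ a₂ b₂ x₁ x₂ (fun h => ?_) fun h => ?_
  · rw [h, dist_comm, dist_zero_right, norm_one] at hz1
    exact hz1.false
  · rw [← sub_eq_zero.1 h, dist_self] at hz0
    exact hz0.false

theorem exists_norm_K1_le (ℓ : ℤ) :
    ∃ C, ∀ r₁ : ℝ, 0 < r₁ → r₁ < 1 → ∀ x₁ x₂ : ℤ, x₁ ≤ ℓ → x₂ ≤ ℓ →
      ‖K1 n₁ n₂ a₁ b₁ a₂ b₂ r₁ x₁ x₂‖ ≤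
        C * Real.exp (((x₁ : ℝ) - x₂) / 2) * Real.exp (((x₁ : ℝ) + x₂) / 4) := by
  have hsphere : ∀ z ∈ sphere (1 : ℂ) (1 / 5), z ≠ 0 ∧ 1 - z ≠ 0 ∧ 4 / 5 ≤ ‖z‖ ∧
      ‖1 - z‖ = 1 / 5 := fun z hz => by
    have h1z : ‖1 - z‖ = 1 / 5 := by rw [← dist_eq_norm, dist_comm, mem_sphere.1 hz]
    have hz' := one_sub_le_norm_of_mem_sphere hz
    refine ⟨fun h => ?_, fun h => ?_, by linarith, h1z⟩
    · rw [h, norm_zero] at hz'; norm_num at hz'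
    · rw [h, norm_zero] at h1z; norm_num at h1z
  obtain ⟨M, hM0, hM⟩ := IsCompact.exists_nonneg_bound_of_continuousOn (isCompact_sphere _ _)
    (f := k1Integrand n₁ n₂ a₁ b₁ a₂ b₂ ℓ ℓ) fun z hz =>
      (differentiableAt_k1Integrand n₁ n₂ a₁ b₁ a₂ b₂ ℓ ℓ (hsphere z hz).1
        (hsphere z hz).2.1).continuousAt.continuousWithinAt
  refine ⟨1 / 5 * (M * Real.exp (-ℓ / 2)), fun r₁ h₀ h₁ x₁ x₂ hx₁ hx₂ => ?_⟩
  rw [K1_radius_eq n₁ n₂ a₁ b₁ a₂ b₂ ⟨h₀, h₁⟩ (by norm_num : (1 / 5 : ℝ) ∈ Ioo 0 1),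
    K1_eq_circleIntegral]
  refine (norm_two_pi_I_inv_mul_circleIntegral_le (by norm_num) fun z hz => ?_).trans_eq
    (by ring : 1 / 5 * (M * (Real.exp (-ℓ / 2) * (Real.exp (((x₁ : ℝ) - x₂) / 2) *
      Real.exp (((x₁ : ℝ) + x₂) / 4)))) = _)
  obtain ⟨hz0, hz1, hz', h1z⟩ := hsphere z hz
  rw [k1Integrand_eq_mul n₁ n₂ a₁ b₁ a₂ b₂ ℓ x₁ x₂ hz0 hz1, norm_mul, norm_mul, norm_zpow,
    norm_zpow, h1z]
  exact mul_le_mul (hM z hz) (zpow_mul_zpow_le_exp hz' (by norm_num) (by norm_num) hx₁ hx₂)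
    (by positivity) hM0

theorem differentiableAt_knIntegrand (N : ℕ) (x₁ x₂ : ℤ) {z w : ℂ} (hw : 0 < ‖w‖)
    (hwz : ‖w‖ < ‖z - 1‖) (hsum : ‖w‖ + ‖z - 1‖ < 1) :
    DifferentiableAt ℂ (Function.uncurry (knIntegrand n₁ n₂ a₁ b₁ a₂ b₂ N x₁ x₂)) (z, w) := by
  have hz0 : z ≠ 0 := by rintro rfl; norm_num at hsum; linarith
  have hz1 : z - 1 ≠ 0 := norm_pos_iff.1 (hw.trans hwz)
  have hw0 : w ≠ 0 := norm_pos_iff.1 hw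
  have hwz' : w - z ≠ 0 := by
    intro h
    have := norm_sub_le z (z - 1)
    rw [sub_sub_cancel, norm_one] at this
    rw [sub_eq_zero.1 h] at hsum
    linarith
  have hw1z : w - 1 + z ≠ 0 := by
    intro h
    rw [show w = -(z - 1) by linear_combination h, norm_neg] at hwz
    exact hwz.false
  have hden : (w - z) * (w - 1 + z) ≠ 0 := mul_ne_zero hwz' hw1z
  show DifferentiableAt ℂ (fun p : ℂ × ℂ => knIntegrand n₁ n₂ a₁ b₁ a₂ b₂ N x₁ x₂ p.1 p.2) (z, w)
  unfold knIntegrand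
  fun_prop (disch := simp [*])

theorem knIntegrand_eq_mul (N : ℕ) (ℓ x₁ x₂ : ℤ) {z w : ℂ} (hz0 : z ≠ 0) (hz1 : z - 1 ≠ 0)
    (hw0 : w ≠ 0) :
    knIntegrand n₁ n₂ a₁ b₁ a₂ b₂ N x₁ x₂ z w =
      knIntegrand n₁ n₂ a₁ b₁ a₂ b₂ 0 ℓ ℓ z w * (z ^ (x₂ - ℓ) * w ^ (ℓ - x₁)) *
        ((w - 1) * w / ((z - 1) * z)) ^ N := by
  simp only [knIntegrand, Nat.cast_zero, add_zero, sub_zero, zpow_add₀ hz0, zpow_add₀ hw0,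
    zpow_sub₀ hz0, zpow_sub₀ hw0, zpow_add₀ hz1, zpow_neg, zpow_natCast, pow_add, div_pow,
    mul_pow, zpow_one]
  field_simp

theorem knIntegrand_inner_radius_eq (N : ℕ) (x₁ x₂ : ℤ) {r ρ ρ' : ℝ} {z : ℂ}
    (hz : z ∈ sphere (1 : ℂ) r) (hρ : ρ ∈ Ioo 0 (min r (1 - r)))
    (hρ' : ρ' ∈ Ioo 0 (min r (1 - r))) :
    (∮ w in C(0, ρ), knIntegrand n₁ n₂ a₁ b₁ a₂ b₂ N x₁ x₂ z w) =
      ∮ w in C(0, ρ'), knIntegrand n₁ n₂ a₁ b₁ a₂ b₂ N x₁ x₂ z w := by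
  refine circleIntegral_eq_of_differentiableAt_annulus le_rfl (fun w hw₀ hw₁ => ?_) hρ hρ'
  rw [dist_zero_right, lt_min_iff] at *
  rw [mem_sphere, dist_eq_norm] at hz
  exact (differentiableAt_knIntegrand n₁ n₂ a₁ b₁ a₂ b₂ N x₁ x₂ hw₀ (hz ▸ hw₁.1)
    (by linarith [hw₁.2])).comp (f := fun w : ℂ => (z, w)) w (by fun_prop)

theorem knIntegrand_outer_radius_eq (N : ℕ) (x₁ x₂ : ℤ) {ρ r r' : ℝ} {w : ℂ}
    (hρ : 0 < ρ) (hw : w ∈ sphere (0 : ℂ) ρ) (hr : r ∈ Ioo ρ (1 - ρ))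
    (hr' : r' ∈ Ioo ρ (1 - ρ)) :
    (∮ z in C(1, r), knIntegrand n₁ n₂ a₁ b₁ a₂ b₂ N x₁ x₂ z w) =
      ∮ z in C(1, r'), knIntegrand n₁ n₂ a₁ b₁ a₂ b₂ N x₁ x₂ z w := by
  refine circleIntegral_eq_of_differentiableAt_annulus hρ.le (fun z hz₀ hz₁ => ?_) hr hr'
  rw [mem_sphere_zero_iff_norm] at hw
  rw [dist_eq_norm] at hz₀ hz₁
  have h := differentiableAt_knIntegrand n₁ n₂ a₁ b₁ a₂ b₂ N x₁ x₂ (z := z) (w := w)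
    (by rw [hw]; exact hρ) (by rw [hw]; exact hz₀) (by linarith)
  exact h.comp (f := fun z : ℂ => (z, w)) z (by fun_prop)

theorem continuous_knIntegrand_circleMap (N : ℕ) (x₁ x₂ : ℤ) {r ρ : ℝ} (hρ : 0 < ρ)
    (hρr : ρ < r) (hsum : ρ + r < 1) :
    Continuous fun p : ℝ × ℝ =>
      knIntegrand n₁ n₂ a₁ b₁ a₂ b₂ N x₁ x₂ (circleMap 1 r p.1) (circleMap 0 ρ p.2) := by
  have hr : 0 < r := hρ.trans hρr
  refine continuous_iff_continuousAt.2 fun p => ?_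
  have h := differentiableAt_knIntegrand n₁ n₂ a₁ b₁ a₂ b₂ N x₁ x₂
    (z := circleMap 1 r p.1) (w := circleMap 0 ρ p.2)
  simp only [norm_circleMap_zero, circleMap_sub_center, abs_of_pos hρ, abs_of_pos hr] at h
  exact (h hρ hρr hsum).continuousAt.comp
    (f := fun p : ℝ × ℝ => (circleMap 1 r p.1, circleMap 0 ρ p.2)) (by fun_prop)

theorem KN_eq_circleIntegral (r ρ : ℝ) (N : ℕ) (x₁ x₂ : ℤ) :
    KN n₁ n₂ a₁ b₁ a₂ b₂ r ρ N x₁ x₂ = (2 * (π : ℂ) * I)⁻¹ * ∮ z in C(1, r),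
      (2 * (π : ℂ) * I)⁻¹ * ∮ w in C(0, ρ), knIntegrand n₁ n₂ a₁ b₁ a₂ b₂ N x₁ x₂ z w :=
  rfl

theorem KN_inner_radius_eq (N : ℕ) (x₁ x₂ : ℤ) {r ρ σ : ℝ} (hr : 0 < r)
    (hρ : ρ ∈ Ioo 0 (min r (1 - r))) (hσ : σ ∈ Ioo 0 (min r (1 - r))) :
    KN n₁ n₂ a₁ b₁ a₂ b₂ r ρ N x₁ x₂ = KN n₁ n₂ a₁ b₁ a₂ b₂ r σ N x₁ x₂ := by
  rw [KN_eq_circleIntegral, KN_eq_circleIntegral]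
  congr 1
  refine circleIntegral.integral_congr hr.le fun z hz => ?_
  simp only [knIntegrand_inner_radius_eq n₁ n₂ a₁ b₁ a₂ b₂ N x₁ x₂ hz hρ hσ]

theorem KN_radius_eq (N : ℕ) (x₁ x₂ : ℤ) {r ρ r' ρ' : ℝ} (hr : r ∈ Ioo 0 (1 / 2))
    (hρ : ρ ∈ Ioo 0 (min r (1 - r))) (hr' : r' ∈ Ioo 0 (1 / 2))
    (hρ' : ρ' ∈ Ioo 0 (min r' (1 - r'))) :
    KN n₁ n₂ a₁ b₁ a₂ b₂ r ρ N x₁ x₂ = KN n₁ n₂ a₁ b₁ a₂ b₂ r' ρ' N x₁ x₂ := by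
  -- shrink both inner circles to `σ`, which fits inside both outer circles
  set σ := min ρ ρ'
  have hσ : 0 < σ := lt_min hρ.1 hρ'.1
  have hσρ : σ ≤ ρ := min_le_left _ _
  have hσρ' : σ ≤ ρ' := min_le_right _ _
  have hρr := lt_min_iff.1 hρ.2
  have hρr' := lt_min_iff.1 hρ'.2
  rw [KN_inner_radius_eq n₁ n₂ a₁ b₁ a₂ b₂ N x₁ x₂ hr.1 hρ ⟨hσ, hσρ.trans_lt hρ.2⟩,
    KN_inner_radius_eq n₁ n₂ a₁ b₁ a₂ b₂ N x₁ x₂ hr'.1 hρ' ⟨hσ, hσρ'.trans_lt hρ'.2⟩,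
    KN_eq_circleIntegral, KN_eq_circleIntegral, circleIntegral.integral_const_mul,
    circleIntegral.integral_const_mul,
    circleIntegral_comm (continuous_knIntegrand_circleMap n₁ n₂ a₁ b₁ a₂ b₂ N x₁ x₂ hσ
      (by linarith) (by linarith [hr.2])),
    circleIntegral_comm (continuous_knIntegrand_circleMap n₁ n₂ a₁ b₁ a₂ b₂ N x₁ x₂ hσ
      (by linarith) (by linarith [hr'.2])),
    circleIntegral.integral_congr hσ.le fun w hw =>
      knIntegrand_outer_radius_eq n₁ n₂ a₁ b₁ a₂ b₂ N x₁ x₂ hσ hw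
        ⟨by linarith, by linarith [hr.2]⟩ ⟨by linarith, by linarith [hr'.2]⟩]

theorem exists_norm_KN_le (ℓ : ℤ) :
    ∃ C, ∀ r ρ : ℝ, 0 < r → r < 1 / 2 → 0 < ρ → ρ < min r (1 - r) → ∀ (N : ℕ) (x₁ x₂ : ℤ),
      x₁ ≤ ℓ → x₂ ≤ ℓ → ‖KN n₁ n₂ a₁ b₁ a₂ b₂ r ρ N x₁ x₂‖ ≤
        C * Real.exp (((x₁ : ℝ) - x₂) / 2) * Real.exp (((x₁ : ℝ) + x₂) / 4) * (225 / 256) ^ N := by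
  have hsphere : ∀ z ∈ sphere (1 : ℂ) (1 / 5), ∀ w ∈ sphere (0 : ℂ) (1 / 8),
      ‖z - 1‖ = 1 / 5 ∧ ‖w‖ = 1 / 8 := fun z hz w hw =>
    ⟨by rwa [mem_sphere, dist_eq_norm] at hz, mem_sphere_zero_iff_norm.1 hw⟩
  obtain ⟨M, hM0, hM⟩ := IsCompact.exists_nonneg_bound_of_continuousOn
    ((isCompact_sphere (1 : ℂ) (1 / 5)).prod (isCompact_sphere (0 : ℂ) (1 / 8)))
    (f := Function.uncurry (knIntegrand n₁ n₂ a₁ b₁ a₂ b₂ 0 ℓ ℓ)) fun p hp => by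
      obtain ⟨hz, hw⟩ := hsphere p.1 hp.1 p.2 hp.2
      exact (differentiableAt_knIntegrand n₁ n₂ a₁ b₁ a₂ b₂ 0 ℓ ℓ (by rw [hw]; norm_num)
        (by rw [hz, hw]; norm_num) (by rw [hz, hw]; norm_num)).continuousAt.continuousWithinAt
  refine ⟨1 / 5 * (1 / 8 * (M * Real.exp (-ℓ / 2))),
    fun r ρ hr hr2 hρ hρr N x₁ x₂ hx₁ hx₂ => ?_⟩
  rw [KN_radius_eq n₁ n₂ a₁ b₁ a₂ b₂ N x₁ x₂ ⟨hr, hr2⟩ ⟨hρ, hρr⟩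
    (by norm_num : (1 / 5 : ℝ) ∈ Ioo 0 (1 / 2))
    (by norm_num : (1 / 8 : ℝ) ∈ Ioo 0 (min (1 / 5) (1 - 1 / 5))), KN_eq_circleIntegral]
  refine (norm_two_pi_I_inv_mul_circleIntegral_le (by norm_num) fun z hz =>
    norm_two_pi_I_inv_mul_circleIntegral_le (M := M * (Real.exp (-ℓ / 2) *
      (Real.exp (((x₁ : ℝ) - x₂) / 2) * Real.exp (((x₁ : ℝ) + x₂) / 4))) * (225 / 256) ^ N)
      (by norm_num) fun w hw => ?_).trans_eq (by ring)
  obtain ⟨hz1, hw'⟩ := hsphere z hz w hw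
  have hz' := one_sub_le_norm_of_mem_sphere hz
  rw [knIntegrand_eq_mul n₁ n₂ a₁ b₁ a₂ b₂ N ℓ x₁ x₂ (norm_pos_iff.1 (by linarith))
    (norm_pos_iff.1 (by rw [hz1]; norm_num)) (norm_pos_iff.1 (by rw [hw']; norm_num)),
    norm_mul, norm_mul, norm_mul, norm_pow, norm_zpow, norm_zpow, hw']
  exact mul_le_mul (mul_le_mul (hM (z, w) ⟨hz, hw⟩)
    (zpow_mul_zpow_le_exp (by linarith) (by norm_num) (by norm_num) hx₁ hx₂) (by positivity) hM0)
    (pow_le_pow_left₀ (norm_nonneg _) (norm_sub_one_mul_div_sub_one_mul_le hz hw) N)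
    (by positivity) (by positivity)

end Kernels

theorem stmt12_general (n₁ n₂ : ℕ) (a₁ b₁ a₂ b₂ : ℝ) (ℓ : ℤ) :
    ∃ C > (0 : ℝ), ∃ κ : ℝ, 0 ≤ κ ∧ κ < 1 ∧
      ∀ ρ₀ r₁ r ρ : ℝ, 0 < ρ₀ → ρ₀ < 1 → 0 < r₁ → r₁ < 1 →
        0 < r → r < 1/2 → 0 < ρ → ρ < min r (1 - r) →
        ∀ N : ℕ, 1 ≤ N → ∀ x₁ x₂ : ℤ, x₁ ≤ ℓ → x₂ ≤ ℓ →
          ‖K0 n₁ n₂ a₁ b₁ a₂ b₂ ρ₀ x₁ x₂‖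
              ≤ C * Real.exp (((x₁ : ℝ) - x₂) / 2) * Real.exp (-|(x₂ : ℝ) - x₁| / 4) ∧
          ‖K1 n₁ n₂ a₁ b₁ a₂ b₂ r₁ x₁ x₂‖
              ≤ C * Real.exp (((x₁ : ℝ) - x₂) / 2) * Real.exp (((x₁ : ℝ) + x₂) / 4) ∧
          ‖KN n₁ n₂ a₁ b₁ a₂ b₂ r ρ N x₁ x₂‖
              ≤ C * Real.exp (((x₁ : ℝ) - x₂) / 2) * Real.exp (((x₁ : ℝ) + x₂) / 4) * κ ^ N := by
  obtain ⟨C₀, H₀⟩ := exists_norm_K0_le n₁ n₂ a₁ b₁ a₂ b₂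
  obtain ⟨C₁, H₁⟩ := exists_norm_K1_le n₁ n₂ a₁ b₁ a₂ b₂ ℓ
  obtain ⟨C₂, H₂⟩ := exists_norm_KN_le n₁ n₂ a₁ b₁ a₂ b₂ ℓ
  refine ⟨max 1 (max C₀ (max C₁ C₂)), by positivity, 225 / 256, by norm_num, by norm_num,
    fun ρ₀ r₁ r ρ hρ₀ hρ₀1 hr₁ hr₁1 hr hr2 hρ hρr N _ x₁ x₂ hx₁ hx₂ => ⟨?_, ?_, ?_⟩⟩
  · refine (H₀ ρ₀ hρ₀ hρ₀1 x₁ x₂).trans ?_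
    gcongr
    exact le_max_of_le_right (le_max_left _ _)
  · refine (H₁ r₁ hr₁ hr₁1 x₁ x₂ hx₁ hx₂).trans ?_
    gcongr
    exact le_max_of_le_right (le_max_of_le_right (le_max_left _ _))
  · refine (H₂ r ρ hr hr2 hρ hρr N x₁ x₂ hx₁ hx₂).trans ?_
    gcongr
    exact le_max_of_le_right (le_max_of_le_right (le_max_right _ _))

/-- uniform bounds on the three terms of the finite-`N`
flat-initial-condition kernel, with the `K^{(N)}` bound carrying a factor
`κ^N` for some `κ ∈ [0,1)`. -/
theorem stmt12 (n₁ n₂ : ℕ) (hn₁ : 1 ≤ n₁) (hn₂ : 1 ≤ n₂)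
    (a₁ b₁ a₂ b₂ : ℝ) (ℓ : ℤ) :
    ∃ C > (0 : ℝ), ∃ κ : ℝ, 0 ≤ κ ∧ κ < 1 ∧
      ∀ ρ₀ r₁ r ρ : ℝ, 0 < ρ₀ → ρ₀ < 1 → 0 < r₁ → r₁ < 1 →
        0 < r → r < 1/2 → 0 < ρ → ρ < min r (1 - r) →
        ∀ N : ℕ, 1 ≤ N → ∀ x₁ x₂ : ℤ, x₁ ≤ ℓ → x₂ ≤ ℓ →
          ‖K0 n₁ n₂ a₁ b₁ a₂ b₂ ρ₀ x₁ x₂‖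
              ≤ C * Real.exp (((x₁ : ℝ) - x₂) / 2) * Real.exp (-|(x₂ : ℝ) - x₁| / 4) ∧
          ‖K1 n₁ n₂ a₁ b₁ a₂ b₂ r₁ x₁ x₂‖
              ≤ C * Real.exp (((x₁ : ℝ) - x₂) / 2) * Real.exp (((x₁ : ℝ) + x₂) / 4) ∧
          ‖KN n₁ n₂ a₁ b₁ a₂ b₂ r ρ N x₁ x₂‖
              ≤ C * Real.exp (((x₁ : ℝ) - x₂) / 2) * Real.exp (((x₁ : ℝ) + x₂) / 4) * κ ^ N :=
  stmt12_general n₁ n₂ a₁ b₁ a₂ b₂ ℓ
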